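/- arXiv:2408.00825 — 3 statements merged into one kernel-verified Lean document; each statement's English description precedes it below -/
import Mathlib

section
/- Let B = ((J,K),E) be a bipartite graph where every vertex has finite degree, and suppose for every finite S ⊆ J we have |S| ≤ |∂S| and for every finite S ⊆ K we have |S| ≤ |∂S|, where ∂S denotes the set of vertices adjacent to some element of S. Then B has a perfect matching, i.e., a bijection j : K → J with (j(k), k) ∈ E for all k ∈ K. -/
/-!
Hall's condition on the `K` side, with finite neighbourhoods, gives an injection `K → J` along
edges (the locally finite infinite Hall theorem); symmetrically the condition on the `J` side gives
an injection `J → K` along edges. Schröder–Bernstein, in the form that keeps the bijection inside a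
relation satisfied by both injections, turns them into a bijection along edges.
-/

open Function

theorem exists_injective_of_hall_rel {α β : Type*} (r : α → β → Prop)
    (hfin : ∀ a, {b | r a b}.Finite)
    (hall : ∀ S : Finset α, S.card ≤ {b | ∃ a ∈ S, r a b}.ncard) :
    ∃ f : α → β, Injective f ∧ ∀ a, r a (f a) := by
  classical
  let nbhd : α → Finset β := fun a => (hfin a).toFinset
  have hall_nbhd : ∀ S : Finset α, S.card ≤ (S.biUnion nbhd).card := fun S => by
    have hS : {b | ∃ a ∈ S, r a b} = ↑(S.biUnion nbhd) := by ext b; simp [nbhd]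
    rw [← Set.ncard_coe_finset (S.biUnion nbhd), ← hS]
    exact hall S
  obtain ⟨f, hf_inj, hf_mem⟩ :=
    (Finset.all_card_le_biUnion_card_iff_exists_injective nbhd).1 hall_nbhd
  exact ⟨f, hf_inj, fun a => by simpa [nbhd] using hf_mem a⟩

theorem stmt2_general {J K : Type*}
    (E : J → K → Prop)
    (hJfin : ∀ j, {k | E j k}.Finite)
    (hKfin : ∀ k, {j | E j k}.Finite)
    (hallJ : ∀ S : Finset J, S.card ≤ {k | ∃ j ∈ S, E j k}.ncard)
    (hallK : ∀ S : Finset K, S.card ≤ {j | ∃ k ∈ S, E j k}.ncard) :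
    ∃ f : K → J, Function.Bijective f ∧ ∀ k, E (f k) k := by
  obtain ⟨g, hg_inj, hg_edge⟩ := exists_injective_of_hall_rel (flip E) hKfin hallK
  obtain ⟨h, hh_inj, hh_edge⟩ := exists_injective_of_hall_rel E hJfin hallJ
  exact Embedding.schroeder_bernstein_of_rel hg_inj hh_inj (flip E) hg_edge hh_edge

/-- two-sided infinite Hall marriage theorem. Let `B = ((J,K),E)` be a
bipartite graph (with countable vertex sets) in which every vertex has finite degree, and
suppose that for every finite `S ⊆ J` we have `|S| ≤ |∂S|`, and for every finite `S ⊆ K` we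
have `|S| ≤ |∂S|`, where `∂S` is the set of vertices adjacent to some element of `S`.  Then `B`
has a perfect matching: a bijection `f : K → J` with `(f k, k) ∈ E` for all `k`. -/
theorem stmt2 {J K : Type*} [Countable J] [Countable K]
    (E : J → K → Prop)
    (hJfin : ∀ j, {k | E j k}.Finite)
    (hKfin : ∀ k, {j | E j k}.Finite)
    (hallJ : ∀ S : Finset J, S.card ≤ {k | ∃ j ∈ S, E j k}.ncard)
    (hallK : ∀ S : Finset K, S.card ≤ {j | ∃ k ∈ S, E j k}.ncard) :
    ∃ f : K → J, Function.Bijective f ∧ ∀ k, E (f k) k :=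
  stmt2_general E hJfin hKfin hallJ hallK
end

section
/- If a unitary V on a finite-dimensional Hilbert space satisfies ρ(g)† V ρ(g) = χ(g) V for all g, where ρ is a unitary representation and χ : G → U(1) a character, then χ has finite order in Hom(G, U(1)): there exists n ≥ 1 with χ(g)^n = 1 for all g ∈ G. -/
open Matrix

/-- If a unitary `V` on a finite-dimensional Hilbert space (of dimension
`N ≥ 1`) satisfies `ρ(g)† V ρ(g) = χ(g) V` for all `g`, where `ρ : G → U(N)` is a unitary
representation and `χ : G → U(1) ⊆ ℂ` a character, then `χ` has finite order in `Hom(G, U(1))`: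
there exists `n ≥ 1` with `χ(g)^n = 1` for all `g ∈ G`. -/
theorem stmt17 {G : Type*} [Group G] {N : ℕ} (hN : 0 < N)
    (ρ : G →* Matrix.unitaryGroup (Fin N) ℂ)
    (V : Matrix (Fin N) (Fin N) ℂ) (hV : V ∈ Matrix.unitaryGroup (Fin N) ℂ)
    (χ : G →* ℂ)
    (hχ : ∀ g : G, ((ρ g : Matrix (Fin N) (Fin N) ℂ))ᴴ * V * (ρ g : Matrix (Fin N) (Fin N) ℂ)
      = χ g • V) :
    ∃ n : ℕ, 0 < n ∧ ∀ g : G, χ g ^ n = 1 := by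
  refine ⟨N, hN, fun g => ?_⟩
  have hdetV : V.det ≠ 0 := by
    have h1 : Vᴴ * V = 1 := (Matrix.mem_unitaryGroup_iff'.mp hV)
    intro h0
    have := congrArg Matrix.det h1
    rw [Matrix.det_mul, h0, mul_zero, Matrix.det_one] at this
    exact zero_ne_one this
  have h := congrArg Matrix.det (hχ g)
  have hρ : ((ρ g : Matrix (Fin N) (Fin N) ℂ))ᴴ * (ρ g : Matrix (Fin N) (Fin N) ℂ) = 1 :=
    Matrix.mem_unitaryGroup_iff'.mp (ρ g).2
  have hρdet : ((ρ g : Matrix (Fin N) (Fin N) ℂ))ᴴ.det * ((ρ g : Matrix (Fin N) (Fin N) ℂ)).det = 1 := by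
    have := congrArg Matrix.det hρ
    rwa [Matrix.det_mul, Matrix.det_one] at this
  rw [Matrix.det_smul, Matrix.det_mul, Matrix.det_mul, Fintype.card_fin] at h
  have : V.det = χ g ^ N * V.det := by
    calc V.det = ((ρ g : Matrix (Fin N) (Fin N) ℂ))ᴴ.det * ((ρ g : Matrix (Fin N) (Fin N) ℂ)).det * V.det := by rw [hρdet, one_mul]
    _ = ((ρ g : Matrix (Fin N) (Fin N) ℂ))ᴴ.det * V.det * ((ρ g : Matrix (Fin N) (Fin N) ℂ)).det := by ring
    _ = χ g ^ N * V.det := h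
  have h1 : (1:ℂ) * V.det = χ g ^ N * V.det := by rw [one_mul]; exact this
  exact (mul_right_cancel₀ hdetV h1).symm
end

section
/- Let v, w be unitaries on a finite-dimensional Hilbert space, and for t ∈ [0,1] let u(v,t) = (v ⊗ 1) S(t) (v† ⊗ 1) S(t)†, where S(t) is a continuous path of unitaries on H ⊗ H with S(0) = 1 and S(1) = swap. If u(v,t) = u(w,t) for all t ∈ [0,1], then v w† is a scalar (i.e., v = w as projective unitaries). In particular u(v,1) = v ⊗ v† and the assignment v ↦ (t ↦ u(v,t)) is injective on projective unitaries. -/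
open Matrix
open scoped Kronecker

/-- The swap (exchange) operator on `H ⊗ H` for `H = ℂ^N`: `S (e_i ⊗ e_j) = e_j ⊗ e_i`. -/
def swapMatrix (N : ℕ) : Matrix (Fin N × Fin N) (Fin N × Fin N) ℂ :=
  fun p q => if p.1 = q.2 ∧ p.2 = q.1 then 1 else 0

lemma swapMatrix_apply {N : ℕ} (p q : Fin N × Fin N) :
    swapMatrix N p q = if q = (p.2, p.1) then 1 else 0 := by
  simp only [swapMatrix, Prod.ext_iff]
  congr 1
  simp [eq_comm, and_comm]

lemma swapMatrix_mul {N : ℕ} (M : Matrix (Fin N × Fin N) (Fin N × Fin N) ℂ) :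
    swapMatrix N * M = Matrix.of (fun p q => M (p.2, p.1) q) := by
  ext p q
  rw [Matrix.mul_apply]
  rw [Finset.sum_eq_single (p.2, p.1)]
  · simp [swapMatrix_apply]
  · intro b _ hb
    simp [swapMatrix_apply, hb]
  · intro h; exact absurd (Finset.mem_univ _) h

lemma mul_swapMatrix {N : ℕ} (M : Matrix (Fin N × Fin N) (Fin N × Fin N) ℂ) :
    M * swapMatrix N = Matrix.of (fun p q => M p (q.2, q.1)) := by
  ext p q
  rw [Matrix.mul_apply]
  rw [Finset.sum_eq_single (q.2, q.1)]
  · simp [swapMatrix_apply]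
  · intro b _ hb
    have : q ≠ (b.2, b.1) := by
      rintro rfl; exact hb rfl
    simp [swapMatrix_apply, this]
  · intro h; exact absurd (Finset.mem_univ _) h

lemma swapMatrix_conjTranspose {N : ℕ} : (swapMatrix N)ᴴ = swapMatrix N := by
  ext p q
  simp only [Matrix.conjTranspose_apply, swapMatrix]
  by_cases h : q.1 = p.2 ∧ q.2 = p.1
  · obtain ⟨h1, h2⟩ := h
    simp [h1, h2]
  · have h' : ¬ (p.1 = q.2 ∧ p.2 = q.1) := by
      rintro ⟨h1, h2⟩; exact h ⟨h2.symm, h1.symm⟩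
    rw [if_neg h, if_neg h']
    simp

lemma swap_conj_kron {N : ℕ} (A : Matrix (Fin N) (Fin N) ℂ) :
    swapMatrix N * (A ⊗ₖ (1 : Matrix (Fin N) (Fin N) ℂ)) * swapMatrix N
      = (1 : Matrix (Fin N) (Fin N) ℂ) ⊗ₖ A := by
  rw [swapMatrix_mul, mul_swapMatrix]
  ext p q
  simp [Matrix.kroneckerMap_apply, mul_comm]

/-- Let `v, w` be unitaries on `ℂ^N` (`N ≥ 1`), and for `t ∈ [0,1]` let
`u(x,t) = (x ⊗ 1) S(t) (x† ⊗ 1) S(t)†`, where `S(t)` is a continuous path of unitaries on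
`H ⊗ H` with `S(0) = 1` and `S(1) = swap`.  If `u(v,t) = u(w,t)` for all `t ∈ [0,1]`, then
`v w†` is a scalar, i.e. `v = c • w` (so `v = w` as projective unitaries).  In particular
`u(v,1) = v ⊗ v†`, and the assignment `v ↦ (t ↦ u(v,t))` is injective on projective
unitaries. -/
theorem stmt19 {N : ℕ} (hN : 0 < N)
    (v w : Matrix (Fin N) (Fin N) ℂ)
    (hv : v ∈ Matrix.unitaryGroup (Fin N) ℂ) (hw : w ∈ Matrix.unitaryGroup (Fin N) ℂ)
    (S : ℝ → Matrix (Fin N × Fin N) (Fin N × Fin N) ℂ)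
    (hScont : Continuous S)
    (hSu : ∀ t ∈ Set.Icc (0:ℝ) 1, S t ∈ Matrix.unitaryGroup (Fin N × Fin N) ℂ)
    (hS0 : S 0 = 1) (hS1 : S 1 = swapMatrix N)
    (u : Matrix (Fin N) (Fin N) ℂ → ℝ → Matrix (Fin N × Fin N) (Fin N × Fin N) ℂ)
    (hu : ∀ x t, u x t = (x ⊗ₖ (1 : Matrix (Fin N) (Fin N) ℂ)) * S t
      * (xᴴ ⊗ₖ (1 : Matrix (Fin N) (Fin N) ℂ)) * (S t)ᴴ)
    (heq : ∀ t ∈ Set.Icc (0:ℝ) 1, u v t = u w t) :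
    u v 1 = v ⊗ₖ vᴴ ∧ ∃ c : ℂ, v = c • w := by
  -- compute u x 1 = x ⊗ xᴴ for unitary-independent x
  have key : ∀ x : Matrix (Fin N) (Fin N) ℂ, u x 1 = x ⊗ₖ xᴴ := by
    intro x
    rw [hu, hS1, swapMatrix_conjTranspose]
    have : swapMatrix N * (xᴴ ⊗ₖ (1 : Matrix (Fin N) (Fin N) ℂ)) * swapMatrix N
        = (1 : Matrix (Fin N) (Fin N) ℂ) ⊗ₖ xᴴ := swap_conj_kron xᴴ
    calc x ⊗ₖ (1 : Matrix (Fin N) (Fin N) ℂ) * swapMatrix N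
          * (xᴴ ⊗ₖ (1 : Matrix (Fin N) (Fin N) ℂ)) * swapMatrix N
        = (x ⊗ₖ (1 : Matrix (Fin N) (Fin N) ℂ))
          * (swapMatrix N * (xᴴ ⊗ₖ (1 : Matrix (Fin N) (Fin N) ℂ)) * swapMatrix N) := by
          simp only [mul_assoc]
      _ = (x ⊗ₖ (1 : Matrix (Fin N) (Fin N) ℂ)) * ((1 : Matrix (Fin N) (Fin N) ℂ) ⊗ₖ xᴴ) := by
          rw [this]
      _ = x ⊗ₖ xᴴ := by
          rw [← Matrix.mul_kronecker_mul, mul_one, one_mul]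
  refine ⟨key v, ?_⟩
  -- use heq at t = 1
  have h1 : v ⊗ₖ vᴴ = w ⊗ₖ wᴴ := by
    rw [← key v, ← key w]
    exact heq 1 ⟨zero_le_one, le_refl 1⟩
  -- entrywise: v i k * conj (v l j) = w i k * conj (w l j)
  have hent : ∀ i k l j : Fin N,
      v i k * (starRingEnd ℂ) (v l j) = w i k * (starRingEnd ℂ) (w l j) := by
    intro i k l j
    have := congrFun (congrFun h1 (i, j)) (k, l)
    simpa [Matrix.kroneckerMap_apply, Matrix.conjTranspose_apply] using this
  -- v has a nonzero entry
  have hvne : ∃ i k, v i k ≠ 0 := by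
    by_contra hcon
    push_neg at hcon
    have hv0 : v = 0 := by ext i k; exact hcon i k
    have := hv.2  -- v * star v = 1
    rw [Matrix.mem_unitaryGroup_iff] at hv
    rw [hv0] at hv
    simp at hv
    have i0 : Fin N := ⟨0, hN⟩
    have := congrFun (congrFun hv i0) i0
    simp at this
  obtain ⟨i0, k0, hv0⟩ := hvne
  have hw0 : w i0 k0 ≠ 0 := by
    intro hw0
    -- then v l j = 0 for all l j, contradicting hv0
    apply hv0
    have h2 : v i0 k0 * (starRingEnd ℂ) (v i0 k0) = 0 := by
      rw [hent i0 k0 i0 k0, hw0]; ring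
    rw [Complex.mul_conj] at h2
    have : Complex.normSq (v i0 k0) = 0 := by exact_mod_cast h2
    exact Complex.normSq_eq_zero.mp this
  refine ⟨(starRingEnd ℂ) (w i0 k0) / (starRingEnd ℂ) (v i0 k0), ?_⟩
  ext l j
  have h3 := hent i0 k0 l j
  have hvs : (starRingEnd ℂ) (v i0 k0) ≠ 0 := by
    simpa using hv0
  -- from h3: conj (v l j) = (w i0 k0 / v i0 k0) * conj (w l j)
  have h4 : (starRingEnd ℂ) (v l j)
      = w i0 k0 / v i0 k0 * (starRingEnd ℂ) (w l j) := by
    field_simp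
    linear_combination h3
  have h5 := congrArg (starRingEnd ℂ) h4
  simp only [_root_.map_mul, map_div₀, RingHomCompTriple.comp_apply, Complex.conj_conj] at h5
  simpa [Matrix.smul_apply, smul_eq_mul, map_div₀] using h5
end
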